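/- Let φ : ℝⁿ → ℝⁿ be a smooth diffeomorphism whose Jacobian determinant J(x) := det(Dφ(x)) is everywhere positive. Let S^{ab} = S^{ba}, T^a and S̄^{ab} = S̄^{ba}, T̄^a be smooth on ℝⁿ, and suppose the corresponding second-order operators are φ-related: for every smooth f : ℝⁿ → ℝ and every x ∈ ℝⁿ, ½ S̄^{ab}(φ(x)) (∂_b∂_a f)(φ(x)) + T̄^a(φ(x)) (∂_a f)(φ(x)) = ½ S^{ab}(x) ∂_b∂_a(f∘φ)(x) + T^a(x) ∂_a(f∘φ)(x). Define the subprincipal coefficients γ^a := ∂_bS^{ba} − 2T^a and γ̄^a := ∂_bS̄^{ba} − 2T̄^a. Then γ̄ transforms as an upper connection in the bundle of volume forms: for all x and all a, γ̄^a(φ(x)) = Σ_b ( γ^b(x) + Σ_c S^{bc}(x) ∂_c(log J)(x) ) · ∂_bφ^a(x). -/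

import Mathlib

open scoped BigOperators

/-- Partial derivative in the `a`-th coordinate direction on `ℝⁿ`. -/
noncomputable def pd {n : ℕ} (a : Fin n) (f : (Fin n → ℝ) → ℝ) : (Fin n → ℝ) → ℝ :=
  fun x => fderiv ℝ f x (Pi.single a 1)

/-- Jacobian determinant of a map `φ : ℝⁿ → ℝⁿ`. -/
noncomputable def jacDet {n : ℕ} (φ : (Fin n → ℝ) → (Fin n → ℝ)) : (Fin n → ℝ) → ℝ :=
  fun x => Matrix.det (Matrix.of fun a b => pd b (fun y => φ y a) x)

/-- The subprincipal coefficients `γ^a = ∂_bS^{ba} − 2T^a` of the operator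
`½S^{ab}∂_b∂_a + T^a∂_a`. -/
noncomputable def gammaCoef {n : ℕ} (S : (Fin n → ℝ) → Fin n → Fin n → ℝ)
    (T : (Fin n → ℝ) → Fin n → ℝ) : (Fin n → ℝ) → Fin n → ℝ :=
  fun x a => (∑ b, pd b (fun y => S y b a) x) - 2 * T x a

namespace Aux
variable {n : ℕ}

open scoped ContDiff

lemma contDiff_pd {f : (Fin n → ℝ) → ℝ} (hf : ContDiff ℝ ∞ f) (a : Fin n) :
    ContDiff ℝ ∞ (pd a f) :=
  (hf.fderiv_right (m := ∞) (by simp)).clm_apply contDiff_const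

lemma pd_add {f g : (Fin n → ℝ) → ℝ} {x} (hf : DifferentiableAt ℝ f x)
    (hg : DifferentiableAt ℝ g x) (a : Fin n) :
    pd a (fun y => f y + g y) x = pd a f x + pd a g x := by
  simp [pd, fderiv_fun_add hf hg]

lemma pd_mul {f g : (Fin n → ℝ) → ℝ} {x} (hf : DifferentiableAt ℝ f x)
    (hg : DifferentiableAt ℝ g x) (a : Fin n) :
    pd a (fun y => f y * g y) x = pd a f x * g x + f x * pd a g x := by
  simp [pd, fderiv_fun_mul hf hg]; ring

lemma pd_const (c : ℝ) (a : Fin n) (x) : pd a (fun _ => c) x = 0 := by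
  simp [pd]

lemma pd_const_mul {f : (Fin n → ℝ) → ℝ} {x} (hf : DifferentiableAt ℝ f x) (c : ℝ) (a : Fin n) :
    pd a (fun y => c * f y) x = c * pd a f x := by
  simp [pd, fderiv_const_mul hf]

lemma pd_sum {ι : Type*} (s : Finset ι) {f : ι → (Fin n → ℝ) → ℝ} {x}
    (hf : ∀ i ∈ s, DifferentiableAt ℝ (f i) x) (a : Fin n) :
    pd a (fun y => ∑ i ∈ s, f i y) x = ∑ i ∈ s, pd a (f i) x := by
  simp [pd, fderiv_fun_sum hf]

lemma pd_proj (a b : Fin n) (x) :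
    pd b (fun y : Fin n → ℝ => y a) x = if a = b then 1 else 0 := by
  have : fderiv ℝ (fun y : Fin n → ℝ => y a) x
      = (ContinuousLinearMap.proj a : (Fin n → ℝ) →L[ℝ] ℝ) :=
    (ContinuousLinearMap.proj a : (Fin n → ℝ) →L[ℝ] ℝ).fderiv
  simp only [pd, this, ContinuousLinearMap.proj_apply, Pi.single_apply]

lemma clm_apply_eq_sum (L : (Fin n → ℝ) →L[ℝ] ℝ) (v : Fin n → ℝ) :
    L v = ∑ e, v e * L (Pi.single e 1) := by
  have hv : v = ∑ e, v e • (Pi.single e (1:ℝ) : Fin n → ℝ) := by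
    ext j; simp [Pi.single_apply, Finset.sum_ite_eq]
  conv_lhs => rw [hv]
  rw [map_sum]
  simp [smul_eq_mul]

lemma pd_comp {g : (Fin n → ℝ) → ℝ} {ψ : (Fin n → ℝ) → (Fin n → ℝ)} {x}
    (hg : DifferentiableAt ℝ g (ψ x)) (hψ : DifferentiableAt ℝ ψ x) (b : Fin n) :
    pd b (fun y => g (ψ y)) x = ∑ e, pd b (fun y => ψ y e) x * pd e g (ψ x) := by
  have hcomp : fderiv ℝ (fun y => g (ψ y)) x
      = (fderiv ℝ g (ψ x)).comp (fderiv ℝ ψ x) := fderiv_comp x hg hψ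
  have hproj : ∀ e, (fderiv ℝ (fun y => ψ y e) x) (Pi.single b 1)
      = (fderiv ℝ ψ x) (Pi.single b 1) e := by
    intro e
    have h2 : HasFDerivAt (fun y => ψ y e)
        (((ContinuousLinearMap.proj e : (Fin n → ℝ) →L[ℝ] ℝ)).comp (fderiv ℝ ψ x)) x :=
      ((ContinuousLinearMap.proj e : (Fin n → ℝ) →L[ℝ] ℝ).hasFDerivAt).comp x hψ.hasFDerivAt
    rw [h2.fderiv]; rfl
  simp only [pd, hcomp, ContinuousLinearMap.comp_apply]
  rw [clm_apply_eq_sum (fderiv ℝ g (ψ x))]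
  exact Finset.sum_congr rfl fun e _ => by rw [hproj e]

lemma pd_comm {f : (Fin n → ℝ) → ℝ} (hf : ContDiff ℝ ∞ f) (c e : Fin n) (x) :
    pd c (pd e f) x = pd e (pd c f) x := by
  have hdf : Differentiable ℝ f := hf.differentiable (by simp)
  have hdf' : DifferentiableAt ℝ (fderiv ℝ f) x :=
    ((hf.fderiv_right (m := ∞) (by simp)).differentiable (by simp)).differentiableAt
  have key : ∀ u v : Fin n → ℝ,
      fderiv ℝ (fun y => fderiv ℝ f y u) x (v)
        = fderiv ℝ (fderiv ℝ f) x v u := by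
    intro u v
    rw [fderiv_clm_apply hdf' (differentiableAt_const u)]
    simp
  have symm := second_derivative_symmetric (f' := fderiv ℝ f)
    (f'' := fderiv ℝ (fderiv ℝ f) x)
    (fun y => (hdf y).hasFDerivAt) hdf'.hasFDerivAt
  show fderiv ℝ (fun y => fderiv ℝ f y (Pi.single e 1)) x (Pi.single c 1)
      = fderiv ℝ (fun y => fderiv ℝ f y (Pi.single c 1)) x (Pi.single e 1)
  rw [key, key, symm]

lemma pd_prod {ι : Type*} [DecidableEq ι] (u : Finset ι) {g : ι → (Fin n → ℝ) → ℝ}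
    {x} (h : ∀ i ∈ u, DifferentiableAt ℝ (g i) x) (a : Fin n) :
    pd a (fun y => ∏ i ∈ u, g i y) x
      = ∑ i ∈ u, (∏ j ∈ u.erase i, g j x) * pd a (g i) x := by
  have := fderiv_finset_prod (𝕜 := ℝ) (u := u) (g := g) (x := x) h
  show (fderiv ℝ (∏ i ∈ u, g i ·) x) (Pi.single a 1) = _
  rw [this]
  simp [pd]

lemma det_updateColumn_eq (A : Matrix (Fin n) (Fin n) ℝ) (b : Fin n) (v : Fin n → ℝ) :
    (A.updateCol b v).det = ∑ e, A.adjugate b e * v e := by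
  rw [← Matrix.cramer_apply, Matrix.cramer_eq_adjugate_mulVec]
  simp [Matrix.mulVec, dotProduct]

/-- entries of the Jacobian matrix are smooth -/
lemma contDiff_entry {φ : (Fin n → ℝ) → (Fin n → ℝ)} (hφ : ContDiff ℝ ∞ φ) (a b : Fin n) :
    ContDiff ℝ ∞ (fun y => pd b (fun z => φ z a) y) :=
  contDiff_pd ((contDiff_pi.mp hφ) a) b

lemma jacDet_eq {φ : (Fin n → ℝ) → (Fin n → ℝ)} :
    jacDet φ = fun y => ∑ σ : Equiv.Perm (Fin n),
      ((Equiv.Perm.sign σ : ℤ) : ℝ) * ∏ i, pd i (fun z => φ z (σ i)) y := by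
  funext y
  rw [jacDet, Matrix.det_apply']
  rfl

lemma contDiff_jacDet {φ : (Fin n → ℝ) → (Fin n → ℝ)} (hφ : ContDiff ℝ ∞ φ) :
    ContDiff ℝ ∞ (jacDet φ) := by
  rw [jacDet_eq]
  refine ContDiff.sum fun σ _ => ContDiff.mul contDiff_const ?_
  exact contDiff_prod fun i _ => contDiff_entry hφ (σ i) i

lemma differentiableAt_prod {ι : Type*} [DecidableEq ι] (u : Finset ι)
    {g : ι → (Fin n → ℝ) → ℝ} {x} (h : ∀ i ∈ u, DifferentiableAt ℝ (g i) x) :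
    DifferentiableAt ℝ (fun y => ∏ i ∈ u, g i y) x := by
  classical
  induction u using Finset.induction_on with
  | empty => simpa using differentiableAt_const (1:ℝ)
  | insert a s hni ih =>
      simp only [Finset.prod_insert hni]
      exact ((h a (Finset.mem_insert_self a s)).mul
        (ih fun i hi => h i (Finset.mem_insert_of_mem hi)))

lemma pd_jacDet {φ : (Fin n → ℝ) → (Fin n → ℝ)} (hφ : ContDiff ℝ ∞ φ) (c : Fin n)
    (x : Fin n → ℝ) :
    pd c (jacDet φ) x = ∑ b, ∑ e,
      (Matrix.of fun a b => pd b (fun y => φ y a) x).adjugate b e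
        * pd c (fun y => pd b (fun z => φ z e) y) x := by
  classical
  set P : Matrix (Fin n) (Fin n) ℝ := Matrix.of fun a b => pd b (fun y => φ y a) x with hP
  have hdiff : ∀ a b : Fin n, DifferentiableAt ℝ (fun y => pd b (fun z => φ z a) y) x :=
    fun a b => ((contDiff_entry hφ a b).differentiable (by simp)).differentiableAt
  rw [jacDet_eq]
  rw [pd_sum _ (fun σ _ => DifferentiableAt.const_mul
    (differentiableAt_prod _ (fun i _ => hdiff (σ i) i)) _)]
  have step1 : ∀ σ : Equiv.Perm (Fin n),
      pd c (fun y => ((Equiv.Perm.sign σ : ℤ) : ℝ) * ∏ i, pd i (fun z => φ z (σ i)) y) x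
      = ∑ b, ((Equiv.Perm.sign σ : ℤ) : ℝ) * ((∏ i ∈ Finset.univ.erase b, P (σ i) i)
          * pd c (fun y => pd b (fun z => φ z (σ b)) y) x) := by
    intro σ
    rw [pd_const_mul (differentiableAt_prod _ (fun i _ => hdiff (σ i) i)),
      pd_prod _ (fun i _ => hdiff (σ i) i), Finset.mul_sum]
    simp only [hP, Matrix.of_apply]
  simp only [step1]
  rw [Finset.sum_comm]
  refine Finset.sum_congr rfl fun b _ => ?_
  have hdet : ∀ v : Fin n → ℝ, (P.updateCol b v).det
      = ∑ σ : Equiv.Perm (Fin n), ((Equiv.Perm.sign σ : ℤ) : ℝ)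
          * ((∏ i ∈ Finset.univ.erase b, P (σ i) i) * v (σ b)) := by
    intro v
    rw [Matrix.det_apply']
    refine Finset.sum_congr rfl fun σ _ => ?_
    rw [← Finset.mul_prod_erase Finset.univ _ (Finset.mem_univ b)]
    have h1 : (P.updateCol b v) (σ b) b = v (σ b) := by
      simp [Matrix.updateCol_apply]
    have h2 : ∏ i ∈ Finset.univ.erase b, (P.updateCol b v) (σ i) i
        = ∏ i ∈ Finset.univ.erase b, P (σ i) i := by
      refine Finset.prod_congr rfl fun i hi => ?_
      rw [Matrix.updateCol_apply, if_neg (Finset.mem_erase.mp hi).1]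
    rw [h1, h2]; ring
  have := hdet (fun r => pd c (fun y => pd b (fun z => φ z r) y) x)
  rw [← this, det_updateColumn_eq]

lemma left_inv_contraction {φ ψ : (Fin n → ℝ) → (Fin n → ℝ)}
    (hφ : ContDiff ℝ ∞ φ) (hψ : ContDiff ℝ ∞ ψ)
    (hleft : Function.LeftInverse ψ φ) (x : Fin n → ℝ) (e c : Fin n) :
    ∑ b, pd b (fun z => ψ z e) (φ x) * pd c (fun y => φ y b) x
      = if e = c then 1 else 0 := by
  have hψe : DifferentiableAt ℝ (fun z => ψ z e) (φ x) :=
    (((contDiff_pi.mp hψ) e).differentiable (by simp)).differentiableAt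
  have hφd : DifferentiableAt ℝ φ x := (hφ.differentiable (by simp)).differentiableAt
  have hcomp := pd_comp (g := fun z => ψ z e) (ψ := φ) (x := x) hψe hφd c
  have hid : (fun y => ψ (φ y) e) = fun y : Fin n → ℝ => y e := by
    funext y; rw [hleft y]
  rw [hid] at hcomp
  rw [pd_proj] at hcomp
  calc ∑ b, pd b (fun z => ψ z e) (φ x) * pd c (fun y => φ y b) x
      = ∑ b, pd c (fun y => φ y b) x * pd b (fun z => ψ z e) (φ x) :=
        Finset.sum_congr rfl fun b _ => mul_comm _ _
    _ = if e = c then 1 else 0 := hcomp.symm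

lemma pd_log_jacDet {φ ψ : (Fin n → ℝ) → (Fin n → ℝ)}
    (hφ : ContDiff ℝ ∞ φ) (hψ : ContDiff ℝ ∞ ψ)
    (hleft : Function.LeftInverse ψ φ)
    (hJ : ∀ x, 0 < jacDet φ x) (c : Fin n) (x : Fin n → ℝ) :
    pd c (fun y => Real.log (jacDet φ y)) x
      = ∑ b, ∑ e, pd e (fun z => ψ z b) (φ x)
          * pd c (fun y => pd b (fun z => φ z e) y) x := by
  classical
  set P : Matrix (Fin n) (Fin n) ℝ := Matrix.of fun a b => pd b (fun y => φ y a) x with hPdef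
  set M : Matrix (Fin n) (Fin n) ℝ :=
    Matrix.of fun e b => pd b (fun z => ψ z e) (φ x) with hMdef
  have hJx : jacDet φ x ≠ 0 := ne_of_gt (hJ x)
  have hPdet : P.det = jacDet φ x := rfl
  have hMP : M * P = 1 := by
    ext e c
    simp only [Matrix.mul_apply, hMdef, hPdef, Matrix.of_apply, Matrix.one_apply]
    rw [left_inv_contraction hφ hψ hleft x e c]
  have hPinv : P⁻¹ = M := Matrix.inv_eq_left_inv hMP
  have hadj : P.adjugate = P.det • M := by
    have hdetU : IsUnit P.det := by rw [hPdet]; exact isUnit_iff_ne_zero.mpr hJx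
    calc P.adjugate = (P⁻¹ * P) * P.adjugate := by
          rw [Matrix.nonsing_inv_mul _ hdetU, Matrix.one_mul]
      _ = P⁻¹ * (P * P.adjugate) := by rw [Matrix.mul_assoc]
      _ = P⁻¹ * (P.det • 1) := by rw [Matrix.mul_adjugate]
      _ = P.det • P⁻¹ := by
          rw [Matrix.mul_smul, Matrix.mul_one]
      _ = P.det • M := by rw [hPinv]
  -- derivative of log ∘ jacDet
  have hJd : DifferentiableAt ℝ (jacDet φ) x :=
    ((contDiff_jacDet hφ).differentiable (by simp)).differentiableAt
  have hlog : HasFDerivAt (fun y => Real.log (jacDet φ y))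
      ((jacDet φ x)⁻¹ • fderiv ℝ (jacDet φ) x) x :=
    (Real.hasDerivAt_log hJx).comp_hasFDerivAt x hJd.hasFDerivAt
  have h1 : pd c (fun y => Real.log (jacDet φ y)) x
      = (jacDet φ x)⁻¹ * pd c (jacDet φ) x := by
    show (fderiv ℝ (fun y => Real.log (jacDet φ y)) x) (Pi.single c 1)
      = (jacDet φ x)⁻¹ * (fderiv ℝ (jacDet φ) x) (Pi.single c 1)
    rw [hlog.fderiv]; rfl
  rw [h1, pd_jacDet hφ c x]
  have h2 : ∀ b e : Fin n, (Matrix.of fun a b => pd b (fun y => φ y a) x).adjugate b e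
      = jacDet φ x * pd e (fun z => ψ z b) (φ x) := by
    intro b e
    have : P.adjugate b e = (P.det • M) b e := by rw [hadj]
    simpa [hPdet, hMdef, Matrix.smul_apply, smul_eq_mul] using this
  simp only [h2]
  rw [Finset.mul_sum]
  refine Finset.sum_congr rfl fun b _ => ?_
  rw [Finset.mul_sum]
  refine Finset.sum_congr rfl fun e _ => ?_
  rw [show (jacDet φ x)⁻¹ * (jacDet φ x * pd e (fun z => ψ z b) (φ x)
      * pd c (fun y => pd b (fun z => φ z e) y) x)
    = ((jacDet φ x)⁻¹ * jacDet φ x) * (pd e (fun z => ψ z b) (φ x)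
      * pd c (fun y => pd b (fun z => φ z e) y) x) from by ring,
    inv_mul_cancel₀ hJx, one_mul]

lemma sum_rotate {f : Fin n → Fin n → Fin n → Fin n → ℝ} :
    (∑ b, ∑ e, ∑ c, ∑ d, f b e c d) = ∑ e, ∑ c, ∑ d, ∑ b, f b e c d := by
  rw [Finset.sum_comm]
  refine Finset.sum_congr rfl fun e _ => ?_
  rw [Finset.sum_comm]
  refine Finset.sum_congr rfl fun c _ => ?_
  rw [Finset.sum_comm]

lemma key_algebra (a : Fin n) (P M : Fin n → Fin n → ℝ) (Q : Fin n → Fin n → Fin n → ℝ)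
    (dS : Fin n → Fin n → Fin n → ℝ) (Sx : Fin n → Fin n → ℝ) (Tx L : Fin n → ℝ)
    (hδ : ∀ e c, (∑ b, M e b * P b c) = if e = c then 1 else 0)
    (hQsym : ∀ r c e, Q r c e = Q r e c)
    (hSsym : ∀ c d, Sx c d = Sx d c)
    (hL : ∀ c, L c = ∑ b, ∑ e, M b e * Q e b c) :
    (∑ b, ∑ e, M e b * (∑ c, ∑ d, (dS e c d * P b c * P a d
        + Sx c d * Q b c e * P a d + Sx c d * P b c * Q a d e)))
      - ((∑ c, ∑ d, Sx c d * Q a c d) + 2 * ∑ c, Tx c * P a c)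
    = ∑ b, ((∑ c, dS c c b) - 2 * Tx b + ∑ c, Sx b c * L c) * P a b := by
  classical
  have split : (∑ b, ∑ e, M e b * (∑ c, ∑ d, (dS e c d * P b c * P a d
        + Sx c d * Q b c e * P a d + Sx c d * P b c * Q a d e)))
      = (∑ b, ∑ e, ∑ c, ∑ d, M e b * (dS e c d * P b c * P a d))
        + (∑ b, ∑ e, ∑ c, ∑ d, M e b * (Sx c d * Q b c e * P a d))
        + (∑ b, ∑ e, ∑ c, ∑ d, M e b * (Sx c d * P b c * Q a d e)) := by
    simp only [Finset.mul_sum, mul_add, Finset.sum_add_distrib]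
  have e1 : (∑ b, ∑ e, ∑ c, ∑ d, M e b * (dS e c d * P b c * P a d))
      = ∑ b, (∑ c, dS c c b) * P a b := by
    rw [sum_rotate]
    have inner : ∀ e, (∑ c, ∑ d, ∑ b, M e b * (dS e c d * P b c * P a d))
        = ∑ d, dS e e d * P a d := by
      intro e
      have h1 : ∀ c d, (∑ b, M e b * (dS e c d * P b c * P a d))
          = (if e = c then 1 else 0) * (dS e c d * P a d) := by
        intro c d
        rw [← hδ e c, Finset.sum_mul]
        exact Finset.sum_congr rfl fun b _ => by ring
      simp only [h1]
      rw [Finset.sum_comm]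
      simp [Finset.sum_ite_eq, ite_mul]
    simp only [inner]
    rw [Finset.sum_comm]
    exact Finset.sum_congr rfl fun b _ => by rw [Finset.sum_mul]
  have e2 : (∑ b, ∑ e, ∑ c, ∑ d, M e b * (Sx c d * Q b c e * P a d))
      = ∑ b, (∑ c, Sx b c * L c) * P a b := by
    rw [sum_rotate, sum_rotate]
    have inner : ∀ c d, (∑ b, ∑ e, M e b * (Sx c d * Q b c e * P a d))
        = (Sx c d * P a d) * L c := by
      intro c d
      have h1 : (∑ b, ∑ e, M e b * (Sx c d * Q b c e * P a d))
          = (Sx c d * P a d) * ∑ b, ∑ e, M e b * Q b c e := by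
        rw [Finset.mul_sum]
        refine Finset.sum_congr rfl fun b _ => ?_
        rw [Finset.mul_sum]
        exact Finset.sum_congr rfl fun e _ => by ring
      rw [h1]
      congr 1
      rw [hL c, Finset.sum_comm]
      refine Finset.sum_congr rfl fun e _ => Finset.sum_congr rfl fun b _ => ?_
      rw [hQsym b c e]
    simp only [inner]
    have : ∀ c, (∑ d, Sx c d * P a d * L c) = (∑ d, Sx c d * L c * P a d) :=
      fun c => Finset.sum_congr rfl fun d _ => by ring
    simp only [this]
    rw [Finset.sum_comm]
    refine Finset.sum_congr rfl fun d _ => ?_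
    rw [Finset.sum_mul]
    refine Finset.sum_congr rfl fun c _ => ?_
    rw [hSsym c d]
  have e3 : (∑ b, ∑ e, ∑ c, ∑ d, M e b * (Sx c d * P b c * Q a d e))
      = ∑ c, ∑ d, Sx c d * Q a c d := by
    rw [sum_rotate]
    have inner : ∀ e, (∑ c, ∑ d, ∑ b, M e b * (Sx c d * P b c * Q a d e))
        = ∑ d, Sx e d * Q a d e := by
      intro e
      have h1 : ∀ c d, (∑ b, M e b * (Sx c d * P b c * Q a d e))
          = (if e = c then 1 else 0) * (Sx c d * Q a d e) := by
        intro c d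
        rw [← hδ e c, Finset.sum_mul]
        exact Finset.sum_congr rfl fun b _ => by ring
      simp only [h1]
      rw [Finset.sum_comm]
      simp [Finset.sum_ite_eq, ite_mul]
    simp only [inner]
    refine Finset.sum_congr rfl fun e _ => Finset.sum_congr rfl fun d _ => ?_
    rw [hQsym a d e]
  rw [split, e1, e2, e3]
  have rhs : (∑ b, ((∑ c, dS c c b) - 2 * Tx b + ∑ c, Sx b c * L c) * P a b)
      = (∑ b, (∑ c, dS c c b) * P a b) + (∑ b, (∑ c, Sx b c * L c) * P a b)
        - 2 * ∑ b, Tx b * P a b := by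
    rw [Finset.mul_sum, ← Finset.sum_add_distrib, ← Finset.sum_sub_distrib]
    exact Finset.sum_congr rfl fun b _ => by ring
  rw [rhs]
  ring

lemma sum2_expand (S' A B C D : Fin n → Fin n → ℝ) (u v : ℝ) :
    (∑ c, ∑ d, S' c d * (A c d * u + B c d + C c d + v * D c d))
      = (∑ c, ∑ d, S' c d * A c d) * u + (∑ c, ∑ d, S' c d * B c d)
        + (∑ c, ∑ d, S' c d * C c d) + v * (∑ c, ∑ d, S' c d * D c d) := by
  rw [Finset.sum_mul, Finset.mul_sum, ← Finset.sum_add_distrib, ← Finset.sum_add_distrib,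
    ← Finset.sum_add_distrib]
  refine Finset.sum_congr rfl fun c _ => ?_
  rw [Finset.sum_mul, Finset.mul_sum, ← Finset.sum_add_distrib, ← Finset.sum_add_distrib,
    ← Finset.sum_add_distrib]
  exact Finset.sum_congr rfl fun d _ => by ring

end Aux

open Aux
open scoped ContDiff

/-- if the second-order operators with coefficients `(S, T)` and `(S̄, T̄)`
are related by a smooth diffeomorphism `φ` with positive Jacobian `J`, then the
subprincipal coefficients transform as an upper connection in the bundle of volume forms:
`γ̄^a(φ(x)) = Σ_b (γ^b(x) + Σ_c S^{bc}(x) ∂_c(log J)(x)) ∂_bφ^a(x)`. -/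
theorem subprincipal_symbol_transforms_as_upper_connection
    {n : ℕ} (φ ψ : (Fin n → ℝ) → (Fin n → ℝ))
    (hφ : ContDiff ℝ (⊤ : ℕ∞) φ) (hψ : ContDiff ℝ (⊤ : ℕ∞) ψ)
    (hleft : Function.LeftInverse ψ φ) (hright : Function.RightInverse ψ φ)
    (hJ : ∀ x, 0 < jacDet φ x)
    (S Sbar : (Fin n → ℝ) → Fin n → Fin n → ℝ)
    (T Tbar : (Fin n → ℝ) → Fin n → ℝ)
    (hS : ∀ a b : Fin n, ContDiff ℝ (⊤ : ℕ∞) (fun x => S x a b))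
    (hSsymm : ∀ x, ∀ a b : Fin n, S x a b = S x b a)
    (hSbar : ∀ a b : Fin n, ContDiff ℝ (⊤ : ℕ∞) (fun x => Sbar x a b))
    (hSbarsymm : ∀ x, ∀ a b : Fin n, Sbar x a b = Sbar x b a)
    (hT : ∀ a : Fin n, ContDiff ℝ (⊤ : ℕ∞) (fun x => T x a))
    (hTbar : ∀ a : Fin n, ContDiff ℝ (⊤ : ℕ∞) (fun x => Tbar x a))
    (hrelated : ∀ f : (Fin n → ℝ) → ℝ, ContDiff ℝ (⊤ : ℕ∞) f → ∀ x,
      (1/2) * (∑ a, ∑ b, Sbar (φ x) a b * pd b (pd a f) (φ x))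
          + ∑ a, Tbar (φ x) a * pd a f (φ x)
        = (1/2) * (∑ a, ∑ b, S x a b * pd b (pd a (fun y => f (φ y))) x)
          + ∑ a, T x a * pd a (fun y => f (φ y)) x) :
    ∀ x, ∀ a : Fin n,
      gammaCoef Sbar Tbar (φ x) a =
        ∑ b, (gammaCoef S T x b
            + ∑ c, S x b c * pd c (fun y => Real.log (jacDet φ y)) x)
          * pd b (fun y => φ y a) x := by
  classical
  have hφ' : ContDiff ℝ ∞ φ := hφ.of_le (by simp)
  have hψ' : ContDiff ℝ ∞ ψ := hψ.of_le (by simp)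
  have hφi : ∀ r, ContDiff ℝ ∞ (fun y => φ y r) := fun r => (contDiff_pi.mp hφ') r
  have hSi : ∀ c d, ContDiff ℝ ∞ (fun y => S y c d) := fun c d => (hS c d).of_le (by simp)
  have dφ : ∀ r z, DifferentiableAt ℝ (fun y => φ y r) z :=
    fun r z => ((hφi r).differentiable (by simp)).differentiableAt
  have dψ : ∀ z, DifferentiableAt ℝ ψ z :=
    fun z => (hψ'.differentiable (by simp)).differentiableAt
  have dpφ : ∀ r c z, DifferentiableAt ℝ (pd c (fun y => φ y r)) z :=
    fun r c z => ((contDiff_pd (hφi r) c).differentiable (by simp)).differentiableAt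
  have dS' : ∀ c d z, DifferentiableAt ℝ (fun y => S y c d) z :=
    fun c d z => ((hSi c d).differentiable (by simp)).differentiableAt
  have dproj : ∀ (r : Fin n) (z : Fin n → ℝ), DifferentiableAt ℝ (fun y : Fin n → ℝ => y r) z :=
    fun r z => (ContinuousLinearMap.proj r : (Fin n → ℝ) →L[ℝ] ℝ).differentiableAt
  -- Step A : formula for Tbar
  have hTbar_eq : ∀ z a', Tbar (φ z) a'
      = (1/2) * (∑ c, ∑ d, S z c d * pd d (pd c (fun y => φ y a')) z)
        + ∑ c, T z c * pd c (fun y => φ y a') z := by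
    intro z a'
    have hf : ContDiff ℝ (⊤ : ℕ∞) (fun y : Fin n → ℝ => y a') :=
      (ContinuousLinearMap.proj a' : (Fin n → ℝ) →L[ℝ] ℝ).contDiff
    have h := hrelated _ hf z
    have hp : ∀ b : Fin n, pd b (fun y : Fin n → ℝ => y a')
        = fun _ => if a' = b then 1 else 0 := fun b => funext fun w => pd_proj a' b w
    simp only [hp, pd_const, mul_zero, Finset.sum_const_zero, mul_ite, mul_one,
      Finset.sum_ite_eq, Finset.mem_univ, if_true, zero_add] at h
    exact h
  -- Step B : formula for Sbar
  have hSbar_eq : ∀ z a' b', Sbar (φ z) a' b'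
      = ∑ c, ∑ d, S z c d * pd c (fun y => φ y a') z * pd d (fun y => φ y b') z := by
    intro z a' b'
    have hf : ContDiff ℝ (⊤ : ℕ∞) (fun y : Fin n → ℝ => y a' * y b') :=
      ((ContinuousLinearMap.proj a' : (Fin n → ℝ) →L[ℝ] ℝ).contDiff).mul
        ((ContinuousLinearMap.proj b' : (Fin n → ℝ) →L[ℝ] ℝ).contDiff)
    have h := hrelated _ hf z
    have hd1 : ∀ c, pd c (fun y : Fin n → ℝ => y a' * y b')
        = fun w => (if a' = c then 1 else 0) * w b' + (if b' = c then 1 else 0) * w a' := by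
      intro c; funext w
      rw [pd_mul (dproj a' w) (dproj b' w) c, pd_proj, pd_proj]; ring
    have hd2 : ∀ c d (w : Fin n → ℝ), pd d (pd c (fun y : Fin n → ℝ => y a' * y b')) w
        = (if a' = c then 1 else 0) * (if b' = d then 1 else 0)
          + (if b' = c then 1 else 0) * (if a' = d then 1 else 0) := by
      intro c d w
      rw [hd1 c, pd_add ((dproj b' w).const_mul _) ((dproj a' w).const_mul _) d,
        pd_const_mul (dproj b' w) _ d, pd_const_mul (dproj a' w) _ d, pd_proj, pd_proj]
    have hg1 : ∀ c, pd c (fun y => φ y a' * φ y b')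
        = fun w => pd c (fun y => φ y a') w * φ w b' + φ w a' * pd c (fun y => φ y b') w :=
      fun c => funext fun w => pd_mul (dφ a' w) (dφ b' w) c
    have hg2 : ∀ c d, pd d (pd c (fun y => φ y a' * φ y b')) z
        = pd d (pd c (fun y => φ y a')) z * φ z b'
          + pd c (fun y => φ y a') z * pd d (fun y => φ y b') z
          + pd d (fun y => φ y a') z * pd c (fun y => φ y b') z
          + φ z a' * pd d (pd c (fun y => φ y b')) z := by
      intro c d
      rw [hg1 c, pd_add ((dpφ a' c z).fun_mul (dφ b' z)) ((dφ a' z).fun_mul (dpφ b' c z)) d,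
        pd_mul (dpφ a' c z) (dφ b' z) d, pd_mul (dφ a' z) (dpφ b' c z) d]
      ring
    have hLHS2 : (∑ p, ∑ q, Sbar (φ z) p q
          * pd q (pd p (fun y : Fin n → ℝ => y a' * y b')) (φ z))
        = Sbar (φ z) a' b' + Sbar (φ z) b' a' := by
      simp only [hd2]
      simp [mul_add, Finset.sum_add_distrib, mul_ite, ite_mul, mul_one, mul_zero, one_mul,
        zero_mul, Finset.sum_ite_eq, Finset.mem_univ, if_true]
    have hLHS1 : (∑ p, Tbar (φ z) p * pd p (fun y : Fin n → ℝ => y a' * y b') (φ z))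
        = Tbar (φ z) a' * φ z b' + Tbar (φ z) b' * φ z a' := by
      simp only [hd1]
      simp [mul_add, add_mul, Finset.sum_add_distrib, mul_ite, ite_mul, mul_one, mul_zero,
        one_mul, zero_mul, Finset.sum_ite_eq, Finset.mem_univ, if_true]
    have hRHSsum : (∑ c, ∑ d, S z c d * pd d (pd c (fun y => φ y a' * φ y b')) z)
        = (∑ c, ∑ d, S z c d * pd d (pd c (fun y => φ y a')) z) * φ z b'
          + (∑ c, ∑ d, S z c d
              * (pd c (fun y => φ y a') z * pd d (fun y => φ y b') z))
          + (∑ c, ∑ d, S z c d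
              * (pd d (fun y => φ y a') z * pd c (fun y => φ y b') z))
          + φ z a' * (∑ c, ∑ d, S z c d * pd d (pd c (fun y => φ y b')) z) := by
      simp only [hg2]
      exact sum2_expand _ _ _ _ _ _ _
    have hsym2 : (∑ c, ∑ d, S z c d
          * (pd d (fun y => φ y a') z * pd c (fun y => φ y b') z))
        = (∑ c, ∑ d, S z c d
            * (pd c (fun y => φ y a') z * pd d (fun y => φ y b') z)) := by
      rw [Finset.sum_comm]
      refine Finset.sum_congr rfl fun c _ => Finset.sum_congr rfl fun d _ => ?_
      rw [hSsymm z]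
    have hRHS1 : (∑ c, T z c * pd c (fun y => φ y a' * φ y b') z)
        = (∑ c, T z c * pd c (fun y => φ y a') z) * φ z b'
          + φ z a' * (∑ c, T z c * pd c (fun y => φ y b') z) := by
      simp only [hg1]
      rw [Finset.sum_mul, Finset.mul_sum, ← Finset.sum_add_distrib]
      exact Finset.sum_congr rfl fun c _ => by ring
    rw [hLHS2, hLHS1, hRHSsum, hsym2, hRHS1, hSbarsymm (φ z) b' a'] at h
    have hassoc : (∑ c, ∑ d, S z c d * pd c (fun y => φ y a') z
          * pd d (fun y => φ y b') z)
        = ∑ c, ∑ d, S z c d * (pd c (fun y => φ y a') z * pd d (fun y => φ y b') z) :=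
      Finset.sum_congr rfl fun c _ => Finset.sum_congr rfl fun d _ => mul_assoc _ _ _
    linear_combination h - φ z b' * hTbar_eq z a' - φ z a' * hTbar_eq z b' - hassoc
  -- Step C : chain rule and expansion
  intro x a
  have hchain : ∀ b', pd b' (fun w => Sbar w b' a) (φ x)
      = ∑ e, pd b' (fun w => ψ w e) (φ x)
          * pd e (fun w => ∑ c, ∑ d, S w c d * pd c (fun y => φ y b') w
              * pd d (fun y => φ y a) w) x := by
    intro b'
    have hfun : (fun w => Sbar w b' a)
        = fun w => (fun v => ∑ c, ∑ d, S v c d * pd c (fun y => φ y b') v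
            * pd d (fun y => φ y a) v) (ψ w) := by
      funext w
      conv_lhs => rw [← hright w]
      exact hSbar_eq (ψ w) b' a
    have hGdiffAt : DifferentiableAt ℝ (fun v => ∑ c, ∑ d, S v c d
        * pd c (fun y => φ y b') v * pd d (fun y => φ y a) v) (ψ (φ x)) := by
      refine DifferentiableAt.fun_sum fun c _ => DifferentiableAt.fun_sum fun d _ => ?_
      exact ((dS' c d _).mul (dpφ b' c _)).mul (dpφ a d _)
    have hcomp := pd_comp (x := φ x) hGdiffAt (dψ (φ x)) b'
    rw [hleft x] at hcomp
    rw [hfun]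
    exact hcomp
  have hpdG : ∀ b' e, pd e (fun w => ∑ c, ∑ d, S w c d * pd c (fun y => φ y b') w
        * pd d (fun y => φ y a) w) x
      = ∑ c, ∑ d, (pd e (fun y => S y c d) x * pd c (fun y => φ y b') x
            * pd d (fun y => φ y a) x
          + S x c d * pd e (pd c (fun y => φ y b')) x * pd d (fun y => φ y a) x
          + S x c d * pd c (fun y => φ y b') x * pd e (pd d (fun y => φ y a)) x) := by
    intro b' e
    rw [pd_sum _ (fun c _ => DifferentiableAt.fun_sum fun d _ =>
      ((dS' c d x).fun_mul (dpφ b' c x)).fun_mul (dpφ a d x)) e]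
    refine Finset.sum_congr rfl fun c _ => ?_
    rw [pd_sum _ (fun d _ => ((dS' c d x).fun_mul (dpφ b' c x)).fun_mul (dpφ a d x)) e]
    refine Finset.sum_congr rfl fun d _ => ?_
    rw [pd_mul ((dS' c d x).fun_mul (dpφ b' c x)) (dpφ a d x) e,
      pd_mul (dS' c d x) (dpφ b' c x) e]
    ring
  -- Step D : assemble
  have hδ : ∀ e c, (∑ b, pd b (fun w => ψ w e) (φ x) * pd c (fun y => φ y b) x)
      = if e = c then 1 else 0 := fun e c => left_inv_contraction hφ' hψ' hleft x e c
  have hQsym : ∀ (r c e : Fin n), pd e (pd c (fun y => φ y r)) x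
      = pd c (pd e (fun y => φ y r)) x := fun r c e => pd_comm (hφi r) e c x
  have hL : ∀ c, pd c (fun y => Real.log (jacDet φ y)) x
      = ∑ b, ∑ e, pd e (fun z => ψ z b) (φ x)
          * pd c (fun y => pd b (fun z => φ z e) y) x :=
    fun c => pd_log_jacDet hφ' hψ' hleft hJ c x
  have h2T : 2 * Tbar (φ x) a
      = (∑ c, ∑ d, S x c d * pd d (pd c (fun y => φ y a)) x)
        + 2 * ∑ c, T x c * pd c (fun y => φ y a) x := by
    rw [hTbar_eq x a]; ring
  have hbig : (∑ b, pd b (fun y => Sbar y b a) (φ x))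
      = ∑ b, ∑ e, pd b (fun w => ψ w e) (φ x) * (∑ c, ∑ d,
          (pd e (fun y => S y c d) x * pd c (fun y => φ y b) x * pd d (fun y => φ y a) x
            + S x c d * pd e (pd c (fun y => φ y b)) x * pd d (fun y => φ y a) x
            + S x c d * pd c (fun y => φ y b) x * pd e (pd d (fun y => φ y a)) x)) := by
    refine Finset.sum_congr rfl fun b _ => ?_
    rw [hchain b]
    refine Finset.sum_congr rfl fun e _ => ?_
    rw [hpdG b e]
  unfold gammaCoef
  rw [hbig, h2T]
  exact key_algebra a (fun r i => pd i (fun y => φ y r) x)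
    (fun e b => pd b (fun w => ψ w e) (φ x))
    (fun r c e => pd e (pd c (fun y => φ y r)) x)
    (fun e c d => pd e (fun y => S y c d) x)
    (fun c d => S x c d) (fun c => T x c)
    (fun c => pd c (fun y => Real.log (jacDet φ y)) x)
    hδ hQsym (hSsymm x) hL
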